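/- Let 1 → N → G → Γ → 1 be a short exact sequence of groups with Γ locally cyclic (every finitely generated subgroup of Γ is cyclic). Then every commutator [g,h] with g,h ∈ G is a (G,N)-commutator, i.e., of the form [g',x] with g' ∈ G and x ∈ N. Consequently cl_G and cl_{G,N} coincide on [G,N]. -/

import Mathlib

/-! Local cyclicity makes `q g` and `q h` powers `c ^ a`, `c ^ b` of one element. Replacing `g`
by `g * h ^ (-(a / b))` does not change `⁅g, h⁆` and replaces `a` by `a % b`; swapping the two
entries only inverts the commutator, and inverses of `(G, N)`-commutators are again
`(G, N)`-commutators for normal `N`. So the Euclidean algorithm on `(a, b)` ends at a commutator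
whose second entry lies in `ker q`. -/

open scoped commutatorElement

/-- The mixed commutator length `cl_{G,N}` (∞ if not a product of mixed commutators). -/
noncomputable def clGN {G : Type*} [Group G] (N : Subgroup G) (x : G) : ℕ∞ :=
  sInf {n : ℕ∞ | ∃ k : ℕ, n = k ∧ ∃ g v : Fin k → G, (∀ i, v i ∈ N) ∧
    x = (List.ofFn fun i => ⁅g i, v i⁆).prod}

/-- The rank of a subgroup: minimal size of a generating set. -/
noncomputable def rk {G : Type*} [Group G] (H : Subgroup G) : ℕ∞ :=
  sInf {n : ℕ∞ | ∃ S : Finset G, Subgroup.closure (S : Set G) = H ∧ n = S.card}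

/-- The intermediate rank `intrk^Γ(Λ) = inf {rk Θ | Λ ≤ Θ ≤ Γ}`. -/
noncomputable def intrk {G : Type*} [Group G] (Λ : Subgroup G) : ℕ∞ :=
  sInf {n : ℕ∞ | ∃ Θ : Subgroup G, Λ ≤ Θ ∧ n = rk Θ}

/-- The general rank in the sense of Malcev. -/
noncomputable def genrk (G : Type*) [Group G] : ℕ∞ :=
  sSup {n : ℕ∞ | ∃ Λ : Subgroup G, Λ.FG ∧ n = intrk Λ}

/-- The special rank in the sense of Malcev. -/
noncomputable def sperk (G : Type*) [Group G] : ℕ∞ :=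
  sSup {n : ℕ∞ | ∃ Λ : Subgroup G, Λ.FG ∧ n = rk Λ}

section

variable {G : Type*} [Group G]

def IsMixedCommutator (N : Subgroup G) (y : G) : Prop :=
  ∃ g x : G, x ∈ N ∧ y = ⁅g, x⁆

theorem isMixedCommutator_commutatorElement {N : Subgroup G} (g : G) {x : G} (hx : x ∈ N) :
    IsMixedCommutator N ⁅g, x⁆ :=
  ⟨g, x, hx, rfl⟩

theorem IsMixedCommutator.inv {N : Subgroup G} [N.Normal] {y : G}
    (hy : IsMixedCommutator N y) : IsMixedCommutator N y⁻¹ := by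
  obtain ⟨g, x, hx, rfl⟩ := hy
  refine ⟨g⁻¹, g * x * g⁻¹, ‹N.Normal›.conj_mem x hx g, ?_⟩
  simp only [commutatorElement_def]
  group

theorem commutatorElement_mul_zpow_left (g h : G) (t : ℤ) : ⁅g * h ^ t, h⁆ = ⁅g, h⁆ := by
  simp only [commutatorElement_def]
  group

theorem isMixedCommutator_ker_of_map_eq_zpow {Γ : Type*} [Group Γ] (q : G →* Γ) (c : Γ)
    {a b : ℤ} {g h : G} (hg : q g = c ^ a) (hh : q h = c ^ b) :
    IsMixedCommutator q.ker ⁅g, h⁆ := by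
  induction hn : b.natAbs using Nat.strong_induction_on generalizing a b g h with
  | _ n ih =>
    rcases eq_or_ne b 0 with rfl | hb
    · exact isMixedCommutator_commutatorElement g (by simp [MonoidHom.mem_ker, hh])
    have hg' : q (g * h ^ (-(a / b))) = c ^ (a % b) := by
      rw [map_mul, map_zpow, hg, hh, ← zpow_mul, ← zpow_add, Int.emod_def]
      ring_nf
    have hlt : (a % b).natAbs < n := by
      have := Int.emod_lt a hb
      have := Int.emod_nonneg a hb
      omega
    have := (ih _ hlt hh hg' rfl).inv
    rwa [commutatorElement_inv, commutatorElement_mul_zpow_left] at this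

theorem isMixedCommutator_ker_of_isCyclic {Γ : Type*} [Group Γ] (q : G →* Γ) (g h : G)
    (hcyc : IsCyclic (Subgroup.closure {q g, q h})) : IsMixedCommutator q.ker ⁅g, h⁆ := by
  obtain ⟨c, hc⟩ := (Subgroup.isCyclic_iff_exists_zpowers_eq_top _).mp hcyc
  have hg : q g ∈ Subgroup.zpowers c := hc ▸ Subgroup.subset_closure (by simp)
  have hh : q h ∈ Subgroup.zpowers c := hc ▸ Subgroup.subset_closure (by simp)
  obtain ⟨a, ha⟩ := Subgroup.mem_zpowers_iff.mp hg
  obtain ⟨b, hb⟩ := Subgroup.mem_zpowers_iff.mp hh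
  exact isMixedCommutator_ker_of_map_eq_zpow q c ha.symm hb.symm

theorem clGN_top_eq_of_forall_isMixedCommutator {N : Subgroup G}
    (hN : ∀ g h : G, IsMixedCommutator N ⁅g, h⁆) (y : G) : clGN ⊤ y = clGN N y := by
  unfold clGN
  congr 1
  ext n
  constructor
  · rintro ⟨k, rfl, g, v, -, rfl⟩
    choose g' w hw hgw using fun i => hN (g i) (v i)
    exact ⟨k, rfl, g', w, hw, by simp only [hgw]⟩
  · rintro ⟨k, rfl, g, v, -, rfl⟩
    exact ⟨k, rfl, g, v, fun _ => Subgroup.mem_top _, rfl⟩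

end

theorem commutator_eq_mixed_of_locallyCyclic_general {G Γ : Type*} [Group G] [Group Γ]
    (q : G →* Γ)
    (hlc : ∀ Λ : Subgroup Γ, Λ.FG → IsCyclic Λ) :
    (∀ g h : G, ∃ (g' : G) (x : G), x ∈ q.ker ∧ ⁅g, h⁆ = ⁅g', x⁆) ∧
    (∀ x ∈ ⁅(⊤ : Subgroup G), q.ker⁆, clGN (⊤ : Subgroup G) x = clGN q.ker x) := by
  classical
  have hmixed (g h : G) : IsMixedCommutator q.ker ⁅g, h⁆ :=
    isMixedCommutator_ker_of_isCyclic q g h (hlc _ ⟨{q g, q h}, by simp⟩)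
  exact ⟨hmixed, fun y _ => clGN_top_eq_of_forall_isMixedCommutator hmixed y⟩

/-- if `Γ = G/N` is locally cyclic, every commutator in `G`
is a `(G,N)`-commutator, and `cl_G = cl_{G,N}` on `[G,N]`. -/
theorem commutator_eq_mixed_of_locallyCyclic {G Γ : Type*} [Group G] [Group Γ]
    (q : G →* Γ) (hq : Function.Surjective q)
    (hlc : ∀ Λ : Subgroup Γ, Λ.FG → IsCyclic Λ) :
    (∀ g h : G, ∃ (g' : G) (x : G), x ∈ q.ker ∧ ⁅g, h⁆ = ⁅g', x⁆) ∧
    (∀ x ∈ ⁅(⊤ : Subgroup G), q.ker⁆, clGN (⊤ : Subgroup G) x = clGN q.ker x) :=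
  commutator_eq_mixed_of_locallyCyclic_general q hlc
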